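/- Adequacy of the sequent calculus S_P for the three-valued logic P: a P-sequent Γ₁ | Γ₂ | Γ₃ is provable in S_P if and only if it is valid. -/

import Mathlib

/-!
Every rule of `S_P` is invertible pointwise: under any interpretation its conclusion is true
iff all its premisses are. Soundness follows at once. For completeness, apply the rules
backwards to a valid sequent; each step keeps the premisses valid and lowers a weight of the
sequent, until only atoms and `F` are left. Such a sequent, if valid, is an axiom: otherwise
`F` is not in the f-component and each atom misses some component, and giving the atom the
value of that component refutes the sequent.
-/

/-- Truth values of the three-valued logic P: f < b < t. -/
inductive V3 : Type
  | f | b | t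
deriving DecidableEq, Repr

namespace V3

/-- Negation: t, b, f ↦ f, b, t. -/
def negv : V3 → V3
  | .f => .t
  | .b => .b
  | .t => .f

/-- Conjunction: minimum with respect to f < b < t. -/
def conjv : V3 → V3 → V3
  | .f, _ => .f
  | _, .f => .f
  | .b, _ => .b
  | _, .b => .b
  | .t, .t => .t

/-- Implication: `x ⊃ y` is `y` if `x` is designated (b or t), and `t` otherwise. -/
def impv : V3 → V3 → V3
  | .f, _ => .t
  | _, y => y

end V3

/-- Formulas of the three-valued logic P, with atoms indexed by ℕ, the constant
F, negation, conjunction, and implication. -/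
inductive PForm : Type
  | atom : ℕ → PForm
  | fls : PForm
  | neg : PForm → PForm
  | conj : PForm → PForm → PForm
  | imp : PForm → PForm → PForm
deriving DecidableEq

namespace PForm

/-- The valuation of P extending an interpretation `I : ℕ → V3`. -/
def val (I : ℕ → V3) : PForm → V3
  | atom p => I p
  | fls => .f
  | neg φ => (φ.val I).negv
  | conj φ ψ => (φ.val I).conjv (ψ.val I)
  | imp φ ψ => (φ.val I).impv (ψ.val I)

/-- `I` is a P-model of `φ`: `v_I(φ)` is designated, i.e. b or t. -/
def IsModel (I : ℕ → V3) (φ : PForm) : Prop := φ.val I = .b ∨ φ.val I = .t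

/-- `I` is a P-model of the theory `Γ`. -/
def IsModelSet (I : ℕ → V3) (Γ : Set PForm) : Prop := ∀ φ ∈ Γ, IsModel I φ

end PForm

/-- A P-sequent `Γ₁ | Γ₂ | Γ₃` is true under `I` if some formula of `Γ₁` takes
value f, or some formula of `Γ₂` takes value b, or some formula of `Γ₃` takes
value t under `I`. -/
def PSeqTrue (I : ℕ → V3) (Γ₁ Γ₂ Γ₃ : Finset PForm) : Prop :=
  (∃ φ ∈ Γ₁, φ.val I = .f) ∨ (∃ φ ∈ Γ₂, φ.val I = .b) ∨ (∃ φ ∈ Γ₃, φ.val I = .t)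

/-- A P-sequent is valid if it is true under every interpretation. -/
def PSeqValid (Γ₁ Γ₂ Γ₃ : Finset PForm) : Prop := ∀ I, PSeqTrue I Γ₁ Γ₂ Γ₃

/-- The sequent calculus `S_P` for the three-valued logic P (components in the
order f | b | t). -/
inductive SP : Finset PForm → Finset PForm → Finset PForm → Prop
  | ax (Γ Δ Ω : Finset PForm) (φ : PForm) :
      SP (insert φ Γ) (insert φ Δ) (insert φ Ω)
  | axF (Γ Δ Ω : Finset PForm) :
      SP (insert .fls Γ) Δ Ω
  | negF {Γ Δ Ω : Finset PForm} {φ : PForm} :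
      SP Γ Δ (insert φ Ω) → SP (insert (.neg φ) Γ) Δ Ω
  | negB {Γ Δ Ω : Finset PForm} {φ : PForm} :
      SP Γ (insert φ Δ) Ω → SP Γ (insert (.neg φ) Δ) Ω
  | negT {Γ Δ Ω : Finset PForm} {φ : PForm} :
      SP (insert φ Γ) Δ Ω → SP Γ Δ (insert (.neg φ) Ω)
  | conjF {Γ Δ Ω : Finset PForm} {φ ψ : PForm} :
      SP (insert φ (insert ψ Γ)) Δ Ω → SP (insert (.conj φ ψ) Γ) Δ Ω
  | conjB {Γ Δ Ω : Finset PForm} {φ ψ : PForm} :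
      SP Γ (insert φ (insert ψ Δ)) Ω → SP Γ (insert φ Δ) (insert φ Ω) →
      SP Γ (insert ψ Δ) (insert ψ Ω) → SP Γ (insert (.conj φ ψ) Δ) Ω
  | conjT {Γ Δ Ω : Finset PForm} {φ ψ : PForm} :
      SP Γ Δ (insert φ Ω) → SP Γ Δ (insert ψ Ω) → SP Γ Δ (insert (.conj φ ψ) Ω)
  | impF {Γ Δ Ω : Finset PForm} {φ ψ : PForm} :
      SP Γ (insert φ Δ) (insert φ Ω) → SP (insert ψ Γ) Δ Ω →
      SP (insert (.imp φ ψ) Γ) Δ Ω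
  | impB {Γ Δ Ω : Finset PForm} {φ ψ : PForm} :
      SP Γ (insert φ Δ) (insert φ Ω) → SP Γ (insert ψ Δ) Ω →
      SP Γ (insert (.imp φ ψ) Δ) Ω
  | impT {Γ Δ Ω : Finset PForm} {φ ψ : PForm} :
      SP (insert φ Γ) Δ (insert ψ Ω) → SP Γ Δ (insert (.imp φ ψ) Ω)
  | wF {Γ Δ Ω : Finset PForm} (φ : PForm) :
      SP Γ Δ Ω → SP (insert φ Γ) Δ Ω
  | wB {Γ Δ Ω : Finset PForm} (φ : PForm) :
      SP Γ Δ Ω → SP Γ (insert φ Δ) Ω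
  | wT {Γ Δ Ω : Finset PForm} (φ : PForm) :
      SP Γ Δ Ω → SP Γ Δ (insert φ Ω)

section Semantics

variable {I : ℕ → V3} {Γ Δ Ω : Finset PForm} {φ ψ : PForm}

theorem pSeqTrue_insert_f :
    PSeqTrue I (insert φ Γ) Δ Ω ↔ φ.val I = .f ∨ PSeqTrue I Γ Δ Ω := by
  simp only [PSeqTrue, Finset.exists_mem_insert, or_assoc]

theorem pSeqTrue_insert_b :
    PSeqTrue I Γ (insert φ Δ) Ω ↔ φ.val I = .b ∨ PSeqTrue I Γ Δ Ω := by
  simp only [PSeqTrue, Finset.exists_mem_insert, or_assoc, or_left_comm]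

theorem pSeqTrue_insert_t :
    PSeqTrue I Γ Δ (insert φ Ω) ↔ φ.val I = .t ∨ PSeqTrue I Γ Δ Ω := by
  simp only [PSeqTrue, Finset.exists_mem_insert, or_left_comm]

theorem pSeqTrue_neg_f :
    PSeqTrue I (insert (.neg φ) Γ) Δ Ω ↔ PSeqTrue I Γ Δ (insert φ Ω) := by
  simp only [pSeqTrue_insert_f, pSeqTrue_insert_t, PForm.val]
  cases φ.val I <;> simp [V3.negv]

theorem pSeqTrue_neg_b :
    PSeqTrue I Γ (insert (.neg φ) Δ) Ω ↔ PSeqTrue I Γ (insert φ Δ) Ω := by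
  simp only [pSeqTrue_insert_b, PForm.val]
  cases φ.val I <;> simp [V3.negv]

theorem pSeqTrue_neg_t :
    PSeqTrue I Γ Δ (insert (.neg φ) Ω) ↔ PSeqTrue I (insert φ Γ) Δ Ω := by
  simp only [pSeqTrue_insert_f, pSeqTrue_insert_t, PForm.val]
  cases φ.val I <;> simp [V3.negv]

theorem pSeqTrue_conj_f :
    PSeqTrue I (insert (.conj φ ψ) Γ) Δ Ω ↔ PSeqTrue I (insert φ (insert ψ Γ)) Δ Ω := by
  simp only [pSeqTrue_insert_f, PForm.val]
  cases φ.val I <;> cases ψ.val I <;> simp [V3.conjv]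

theorem pSeqTrue_conj_b :
    PSeqTrue I Γ (insert (.conj φ ψ) Δ) Ω ↔
      PSeqTrue I Γ (insert φ (insert ψ Δ)) Ω ∧ PSeqTrue I Γ (insert φ Δ) (insert φ Ω) ∧
        PSeqTrue I Γ (insert ψ Δ) (insert ψ Ω) := by
  simp only [pSeqTrue_insert_b, pSeqTrue_insert_t, PForm.val]
  cases φ.val I <;> cases ψ.val I <;> simp [V3.conjv]

theorem pSeqTrue_conj_t :
    PSeqTrue I Γ Δ (insert (.conj φ ψ) Ω) ↔
      PSeqTrue I Γ Δ (insert φ Ω) ∧ PSeqTrue I Γ Δ (insert ψ Ω) := by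
  simp only [pSeqTrue_insert_t, PForm.val]
  cases φ.val I <;> cases ψ.val I <;> simp [V3.conjv]

theorem pSeqTrue_imp_f :
    PSeqTrue I (insert (.imp φ ψ) Γ) Δ Ω ↔
      PSeqTrue I Γ (insert φ Δ) (insert φ Ω) ∧ PSeqTrue I (insert ψ Γ) Δ Ω := by
  simp only [pSeqTrue_insert_f, pSeqTrue_insert_b, pSeqTrue_insert_t, PForm.val]
  cases φ.val I <;> cases ψ.val I <;> simp [V3.impv]

theorem pSeqTrue_imp_b :
    PSeqTrue I Γ (insert (.imp φ ψ) Δ) Ω ↔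
      PSeqTrue I Γ (insert φ Δ) (insert φ Ω) ∧ PSeqTrue I Γ (insert ψ Δ) Ω := by
  simp only [pSeqTrue_insert_b, pSeqTrue_insert_t, PForm.val]
  cases φ.val I <;> cases ψ.val I <;> simp [V3.impv]

theorem pSeqTrue_imp_t :
    PSeqTrue I Γ Δ (insert (.imp φ ψ) Ω) ↔ PSeqTrue I (insert φ Γ) Δ (insert ψ Ω) := by
  simp only [pSeqTrue_insert_f, pSeqTrue_insert_t, PForm.val]
  cases φ.val I <;> cases ψ.val I <;> simp [V3.impv]

end Semantics

theorem SP.pSeqTrue {Γ Δ Ω : Finset PForm} (h : SP Γ Δ Ω) (I : ℕ → V3) :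
    PSeqTrue I Γ Δ Ω := by
  induction h with
  | ax Γ Δ Ω φ =>
    simp only [pSeqTrue_insert_f, pSeqTrue_insert_b, pSeqTrue_insert_t]
    cases φ.val I <;> simp
  | axF => exact pSeqTrue_insert_f.2 (Or.inl rfl)
  | negF _ ih => exact pSeqTrue_neg_f.2 ih
  | negB _ ih => exact pSeqTrue_neg_b.2 ih
  | negT _ ih => exact pSeqTrue_neg_t.2 ih
  | conjF _ ih => exact pSeqTrue_conj_f.2 ih
  | conjB _ _ _ ih₁ ih₂ ih₃ => exact pSeqTrue_conj_b.2 ⟨ih₁, ih₂, ih₃⟩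
  | conjT _ _ ih₁ ih₂ => exact pSeqTrue_conj_t.2 ⟨ih₁, ih₂⟩
  | impF _ _ ih₁ ih₂ => exact pSeqTrue_imp_f.2 ⟨ih₁, ih₂⟩
  | impB _ _ ih₁ ih₂ => exact pSeqTrue_imp_b.2 ⟨ih₁, ih₂⟩
  | impT _ ih => exact pSeqTrue_imp_t.2 ih
  | wF _ _ ih => exact pSeqTrue_insert_f.2 (Or.inr ih)
  | wB _ _ ih => exact pSeqTrue_insert_b.2 (Or.inr ih)
  | wT _ _ ih => exact pSeqTrue_insert_t.2 (Or.inr ih)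

namespace PForm

/-- Formulas duplicated by a premiss of (∧:b), (⊃:f) or (⊃:b) count twice, so that every
rule strictly decreases the total weight of a sequent. -/
def weight : PForm → ℕ
  | atom _ => 0
  | fls => 0
  | neg φ => φ.weight + 1
  | conj φ ψ => 2 * φ.weight + 2 * ψ.weight + 1
  | imp φ ψ => 2 * φ.weight + ψ.weight + 1

theorem weight_eq_zero_iff {φ : PForm} : φ.weight = 0 ↔ φ = fls ∨ ∃ p, φ = atom p := by
  cases φ <;> simp [weight]

end PForm

def seqWeight (Γ Δ Ω : Finset PForm) : ℕ :=
  ∑ φ ∈ Γ, φ.weight + ∑ φ ∈ Δ, φ.weight + ∑ φ ∈ Ω, φ.weight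

theorem sum_weight_insert_le (φ : PForm) (Γ : Finset PForm) :
    ∑ ψ ∈ insert φ Γ, ψ.weight ≤ φ.weight + ∑ ψ ∈ Γ, ψ.weight := by
  by_cases h : φ ∈ Γ
  · simp [Finset.insert_eq_of_mem h]
  · simp [Finset.sum_insert h]

theorem seqWeight_eq_zero_iff {Γ Δ Ω : Finset PForm} :
    seqWeight Γ Δ Ω = 0 ↔
      (∀ φ ∈ Γ, φ.weight = 0) ∧ (∀ φ ∈ Δ, φ.weight = 0) ∧ ∀ φ ∈ Ω, φ.weight = 0 := by
  simp only [seqWeight, Nat.add_eq_zero_iff, Finset.sum_eq_zero_iff, and_assoc]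

theorem SP.of_pSeqValid_of_seqWeight_eq_zero {Γ Δ Ω : Finset PForm}
    (h0 : seqWeight Γ Δ Ω = 0) (hv : PSeqValid Γ Δ Ω) : SP Γ Δ Ω := by
  by_cases hF : PForm.fls ∈ Γ
  · rw [← Finset.insert_erase hF]
    exact SP.axF _ _ _
  by_cases hA : ∃ p, .atom p ∈ Γ ∧ .atom p ∈ Δ ∧ .atom p ∈ Ω
  · obtain ⟨p, hΓ, hΔ, hΩ⟩ := hA
    rw [← Finset.insert_erase hΓ, ← Finset.insert_erase hΔ, ← Finset.insert_erase hΩ]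
    exact SP.ax _ _ _ _
  let I : ℕ → V3 := fun p =>
    if .atom p ∉ Γ then .f else if .atom p ∉ Δ then .b else .t
  obtain ⟨hΓ, hΔ, hΩ⟩ := seqWeight_eq_zero_iff.1 h0
  exfalso
  rcases hv I with ⟨φ, hφ, hval⟩ | ⟨φ, hφ, hval⟩ | ⟨φ, hφ, hval⟩
  · obtain rfl | ⟨p, rfl⟩ := PForm.weight_eq_zero_iff.1 (hΓ φ hφ) <;> grind [PForm.val]
  · obtain rfl | ⟨p, rfl⟩ := PForm.weight_eq_zero_iff.1 (hΔ φ hφ) <;> grind [PForm.val]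
  · obtain rfl | ⟨p, rfl⟩ := PForm.weight_eq_zero_iff.1 (hΩ φ hφ) <;> grind [PForm.val]

def SPCompleteBelow (n : ℕ) : Prop :=
  ∀ Γ Δ Ω : Finset PForm, seqWeight Γ Δ Ω < n → PSeqValid Γ Δ Ω → SP Γ Δ Ω

namespace SPCompleteBelow

attribute [local grind =] seqWeight PForm.weight Finset.sum_insert
attribute [local grind! .] sum_weight_insert_le

variable {Γ Δ Ω : Finset PForm} {χ : PForm}

theorem insert_f (ih : SPCompleteBelow (seqWeight (insert χ Γ) Δ Ω)) (hχ : χ ∉ Γ)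
    (hw : 0 < χ.weight) (hv : PSeqValid (insert χ Γ) Δ Ω) : SP (insert χ Γ) Δ Ω := by
  cases χ with
  | atom | fls => simp [PForm.weight] at hw
  | neg φ => exact .negF (ih _ _ _ (by grind) fun I => pSeqTrue_neg_f.1 (hv I))
  | conj φ ψ => exact .conjF (ih _ _ _ (by grind) fun I => pSeqTrue_conj_f.1 (hv I))
  | imp φ ψ =>
    exact .impF (ih _ _ _ (by grind) fun I => (pSeqTrue_imp_f.1 (hv I)).1)
      (ih _ _ _ (by grind) fun I => (pSeqTrue_imp_f.1 (hv I)).2)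

theorem insert_b (ih : SPCompleteBelow (seqWeight Γ (insert χ Δ) Ω)) (hχ : χ ∉ Δ)
    (hw : 0 < χ.weight) (hv : PSeqValid Γ (insert χ Δ) Ω) : SP Γ (insert χ Δ) Ω := by
  cases χ with
  | atom | fls => simp [PForm.weight] at hw
  | neg φ => exact .negB (ih _ _ _ (by grind) fun I => pSeqTrue_neg_b.1 (hv I))
  | conj φ ψ =>
    exact .conjB (ih _ _ _ (by grind) fun I => (pSeqTrue_conj_b.1 (hv I)).1)
      (ih _ _ _ (by grind) fun I => (pSeqTrue_conj_b.1 (hv I)).2.1)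
      (ih _ _ _ (by grind) fun I => (pSeqTrue_conj_b.1 (hv I)).2.2)
  | imp φ ψ =>
    exact .impB (ih _ _ _ (by grind) fun I => (pSeqTrue_imp_b.1 (hv I)).1)
      (ih _ _ _ (by grind) fun I => (pSeqTrue_imp_b.1 (hv I)).2)

theorem insert_t (ih : SPCompleteBelow (seqWeight Γ Δ (insert χ Ω))) (hχ : χ ∉ Ω)
    (hw : 0 < χ.weight) (hv : PSeqValid Γ Δ (insert χ Ω)) : SP Γ Δ (insert χ Ω) := by
  cases χ with
  | atom | fls => simp [PForm.weight] at hw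
  | neg φ => exact .negT (ih _ _ _ (by grind) fun I => pSeqTrue_neg_t.1 (hv I))
  | conj φ ψ =>
    exact .conjT (ih _ _ _ (by grind) fun I => (pSeqTrue_conj_t.1 (hv I)).1)
      (ih _ _ _ (by grind) fun I => (pSeqTrue_conj_t.1 (hv I)).2)
  | imp φ ψ => exact .impT (ih _ _ _ (by grind) fun I => pSeqTrue_imp_t.1 (hv I))

end SPCompleteBelow

theorem SP.of_pSeqValid {Γ Δ Ω : Finset PForm} (hv : PSeqValid Γ Δ Ω) : SP Γ Δ Ω := by
  have ih : SPCompleteBelow (seqWeight Γ Δ Ω) := fun _ _ _ _ hv' => SP.of_pSeqValid hv'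
  by_cases h0 : seqWeight Γ Δ Ω = 0
  · exact SP.of_pSeqValid_of_seqWeight_eq_zero h0 hv
  simp only [seqWeight_eq_zero_iff, not_and_or, not_forall, exists_prop,
    ← Nat.pos_iff_ne_zero] at h0
  rcases h0 with ⟨χ, hχ, hw⟩ | ⟨χ, hχ, hw⟩ | ⟨χ, hχ, hw⟩
  · rw [← Finset.insert_erase hχ] at hv ih ⊢
    exact ih.insert_f (Finset.notMem_erase χ Γ) hw hv
  · rw [← Finset.insert_erase hχ] at hv ih ⊢
    exact ih.insert_b (Finset.notMem_erase χ Δ) hw hv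
  · rw [← Finset.insert_erase hχ] at hv ih ⊢
    exact ih.insert_t (Finset.notMem_erase χ Ω) hw hv
termination_by seqWeight Γ Δ Ω

/-- Adequacy of the sequent calculus `S_P`: a P-sequent `Γ₁ | Γ₂ | Γ₃` is
provable in `S_P` iff it is valid. -/
theorem SP_adequate (Γ₁ Γ₂ Γ₃ : Finset PForm) :
    SP Γ₁ Γ₂ Γ₃ ↔ PSeqValid Γ₁ Γ₂ Γ₃ :=
  ⟨SP.pSeqTrue, SP.of_pSeqValid⟩
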